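/- Let θ ∈ [0, π/2) and let C be a d×d complex matrix taking values in the sector Σ_θ, i.e. (C ξ, ξ) ∈ Σ_θ for all ξ ∈ ℂ^d. Write C = R + iB with R, B real, and let R_s = (R + Rᵀ)/2. Then ‖C ξ‖² ≤ 16 (1 + tan θ)² ‖R_s‖ (R_s ξ, ξ) for all ξ ∈ ℂ^d, where ‖R_s‖ is the operator norm. -/

import Mathlib

/-!
Let `a(ξ, η) = (Cξ, η)` and `s(ξ) = (R_s ξ, ξ)`. Since `2 s(ξ) = Re a(ξ, ξ) + Re a(ξ̄, ξ̄)` and `C`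
is sectorial, `|a(ξ, ξ)| ≤ (1 + tan θ) Re a(ξ, ξ) ≤ M s(ξ)` with `M = 2 (1 + tan θ)`. Polarization
and the invariance of `s` under `ξ ↦ iξ` turn this into `|a(ξ, η)| ≤ M (s(ξ) + s(η))`; rescaling
`ξ ↦ tξ`, `η ↦ η / t` and optimizing over `t` gives `|a(ξ, η)|² ≤ 4 M² s(ξ) s(η)`. For `η = Cξ`
we have `a(ξ, η) = ‖Cξ‖²` and `s(Cξ) ≤ N ‖Cξ‖²`, hence `‖Cξ‖⁴ ≤ 4 M² N s(ξ) ‖Cξ‖²`.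
-/

open Matrix ComplexConjugate Finset

theorem sq_le_four_mul_mul_of_forall_le_mul_add_div {p A B : ℝ} (hp : 0 ≤ p) (hA : 0 ≤ A)
    (hB : 0 ≤ B) (h : ∀ u > 0, p ≤ A * u + B / u) : p ^ 2 ≤ 4 * A * B := by
  rcases hp.eq_or_lt with rfl | hp
  · nlinarith [mul_nonneg hA hB]
  rcases hA.eq_or_lt with rfl | hA
  · have hu := h ((B + 1) / p) (by positivity)
    rw [zero_mul, zero_add, div_div_eq_mul_div, le_div_iff₀ (by positivity)] at hu
    nlinarith
  · have hu := h (p / (2 * A)) (by positivity)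
    have e : A * (p / (2 * A)) + B / (p / (2 * A)) = p / 2 + 2 * A * B / p := by
      field_simp
    rw [e, ← sub_le_iff_le_add', le_div_iff₀ hp] at hu
    nlinarith

theorem le_of_sq_le_mul_of_nonneg {p K : ℝ} (hK : 0 ≤ K) (h : p ^ 2 ≤ K * p) : p ≤ K := by
  nlinarith

namespace LinearMap

variable {E : Type*} [AddCommGroup E] [Module ℂ E]

theorem apply_smul_smul (b : E →ₗ[ℂ] E →ₗ⋆[ℂ] ℂ) (c d : ℂ) (x y : E) :
    b (c • x) (d • y) = c * conj d * b x y := by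
  simp only [map_smulₛₗ, smul_apply, smul_eq_mul, RingHom.id_apply]
  ring

theorem re_apply_add_add_re_apply_sub (b : E →ₗ[ℂ] E →ₗ⋆[ℂ] ℂ) (x y : E) :
    (b (x + y) (x + y)).re + (b (x - y) (x - y)).re = 2 * (b x x).re + 2 * (b y y).re := by
  simp only [map_add, map_sub, add_apply, sub_apply, Complex.add_re, Complex.sub_re]
  ring

variable {a b : E →ₗ[ℂ] E →ₗ⋆[ℂ] ℂ} {M : ℝ} (h : ∀ x, ‖a x x‖ ≤ M * (b x x).re)
include h

theorem norm_apply_add_apply_swap_le (x y : E) :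
    ‖a x y + a y x‖ ≤ M * ((b x x).re + (b y y).re) := by
  have polarization : 2 * (a x y + a y x) = a (x + y) (x + y) - a (x - y) (x - y) := by
    simp only [map_add, map_sub, add_apply, sub_apply]
    ring
  have htri := norm_sub_le (a (x + y) (x + y)) (a (x - y) (x - y))
  rw [← polarization, norm_mul, Complex.norm_two] at htri
  have hpar : M * (b (x + y) (x + y)).re + M * (b (x - y) (x - y)).re
      = 2 * (M * ((b x x).re + (b y y).re)) := by
    rw [← mul_add, re_apply_add_add_re_apply_sub]
    ring
  linarith [h (x + y), h (x - y)]

theorem norm_apply_le_of_norm_apply_self_le (x y : E) :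
    ‖a x y‖ ≤ M * ((b x x).re + (b y y).re) := by
  have hI : b (Complex.I • y) (Complex.I • y) = b y y := by
    rw [apply_smul_smul, Complex.conj_I, mul_neg, Complex.I_mul_I, neg_neg, one_mul]
  have hsub : ‖a x y - a y x‖ ≤ M * ((b x x).re + (b y y).re) := by
    have e : a x (Complex.I • y) + a (Complex.I • y) x = -Complex.I * (a x y - a y x) := by
      simp only [map_smulₛₗ, smul_apply, smul_eq_mul, RingHom.id_apply, Complex.conj_I]
      ring
    have := norm_apply_add_apply_swap_le h x (Complex.I • y)
    rwa [hI, e, norm_mul, norm_neg, Complex.norm_I, one_mul] at this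
  have hadd := norm_apply_add_apply_swap_le h x y
  have htri := norm_add_le (a x y + a y x) (a x y - a y x)
  rw [add_add_sub_cancel, ← two_mul, norm_mul, Complex.norm_two] at htri
  linarith

theorem sq_norm_apply_le_of_norm_apply_self_le (x y : E) :
    ‖a x y‖ ^ 2 ≤ 4 * M ^ 2 * (b x x).re * (b y y).re := by
  have hA : 0 ≤ M * (b x x).re := (norm_nonneg _).trans (h x)
  have hB : 0 ≤ M * (b y y).re := (norm_nonneg _).trans (h y)
  calc ‖a x y‖ ^ 2 ≤ 4 * (M * (b x x).re) * (M * (b y y).re) := by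
        refine sq_le_four_mul_mul_of_forall_le_mul_add_div (norm_nonneg _) hA hB fun u hu => ?_
        have hc : conj (√u : ℂ) = √u := Complex.conj_ofReal _
        have hc0 : (√u : ℂ) ≠ 0 := Complex.ofReal_ne_zero.mpr (Real.sqrt_pos.mpr hu).ne'
        have := norm_apply_le_of_norm_apply_self_le h ((√u : ℂ) • x) ((√u : ℂ)⁻¹ • y)
        rw [apply_smul_smul, apply_smul_smul, apply_smul_smul, map_inv₀, hc,
          mul_inv_cancel₀ hc0, one_mul, ← mul_inv, ← Complex.ofReal_mul, ← Complex.ofReal_inv,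
          Complex.re_ofReal_mul, Complex.re_ofReal_mul, Real.mul_self_sqrt hu.le] at this
        exact this.trans_eq (by ring)
    _ = 4 * M ^ 2 * (b x x).re * (b y y).re := by ring

end LinearMap

theorem Complex.norm_le_one_add_mul_re {z : ℂ} {t : ℝ} (hre : 0 ≤ z.re)
    (him : |z.im| ≤ t * z.re) : ‖z‖ ≤ (1 + t) * z.re := by
  have := Complex.norm_le_abs_re_add_abs_im z
  rw [abs_of_nonneg hre] at this
  linarith

namespace Matrix

variable {n : Type*} [Fintype n]

def sesqForm (A : Matrix n n ℂ) : (n → ℂ) →ₗ[ℂ] (n → ℂ) →ₗ⋆[ℂ] ℂ :=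
  LinearMap.mk₂'ₛₗ (RingHom.id ℂ) (starRingEnd ℂ) (fun x y => A *ᵥ x ⬝ᵥ star y)
    (fun _ _ _ => by simp only [mulVec_add, add_dotProduct])
    (fun _ _ _ => by simp only [mulVec_smul, smul_dotProduct, RingHom.id_apply])
    (fun _ _ _ => by simp only [star_add, dotProduct_add])
    (fun _ _ _ => by simp only [star_smul, dotProduct_smul]; rfl)

@[simp]
theorem sesqForm_apply (A : Matrix n n ℂ) (x y : n → ℂ) : A.sesqForm x y = A *ᵥ x ⬝ᵥ star y :=
  rfl

theorem re_sesqForm_self (A : Matrix n n ℂ) (v : n → ℂ) :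
    (A.sesqForm v v).re = ∑ i, ∑ j, (A i j * v j * conj (v i)).re := by
  simp [dotProduct, mulVec, sum_mul]

theorem dotProduct_star_self_eq_sum_sq_norm (v : n → ℂ) :
    v ⬝ᵥ star v = ((∑ i, ‖v i‖ ^ 2 : ℝ) : ℂ) := by
  simp [dotProduct, Complex.mul_conj']

noncomputable def symmRealPart (C : Matrix n n ℂ) : Matrix n n ℂ :=
  of fun k l => (((C k l).re + (C l k).re) / 2 : ℂ)

theorem two_mul_re_sesqForm_symmRealPart (C : Matrix n n ℂ) (ζ : n → ℂ) :
    2 * (C.symmRealPart.sesqForm ζ ζ).re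
      = (C.sesqForm ζ ζ).re + (C.sesqForm (star ζ) (star ζ)).re := by
  set w : n → n → ℝ := fun i j => (ζ j * conj (ζ i)).re
  have hw : ∀ i j, w j i = w i j := fun i j => by
    simp only [w, Complex.mul_re, Complex.conj_re, Complex.conj_im]
    ring
  calc 2 * (C.symmRealPart.sesqForm ζ ζ).re
      = ∑ i, ∑ j, (C i j).re * w i j + ∑ i, ∑ j, (C j i).re * w i j := by
        simp only [re_sesqForm_self, mul_sum, ← sum_add_distrib, symmRealPart, of_apply]
        refine sum_congr rfl fun i _ => sum_congr rfl fun j _ => ?_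
        simp only [w, Complex.mul_re, Complex.mul_im, Complex.div_ofNat_re, Complex.div_ofNat_im,
          Complex.add_re, Complex.add_im, Complex.ofReal_re, Complex.ofReal_im, Complex.conj_re,
          Complex.conj_im]
        ring
    _ = ∑ i, ∑ j, 2 * ((C i j).re * w i j) := by
        rw [sum_comm (f := fun i j => (C j i).re * w i j)]
        simp only [hw, ← sum_add_distrib, two_mul]
    _ = (C.sesqForm ζ ζ).re + (C.sesqForm (star ζ) (star ζ)).re := by
        simp only [re_sesqForm_self, ← sum_add_distrib]
        refine sum_congr rfl fun i _ => sum_congr rfl fun j _ => ?_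
        simp only [w, Complex.mul_re, Complex.conj_re, Complex.conj_im, Complex.mul_im,
          Pi.star_apply, RCLike.star_def]
        ring

variable {C : Matrix n n ℂ} {t : ℝ}
  (hsec : ∀ ξ, 0 ≤ (C.sesqForm ξ ξ).re ∧ |(C.sesqForm ξ ξ).im| ≤ t * (C.sesqForm ξ ξ).re)
include hsec

theorem re_sesqForm_symmRealPart_nonneg (ζ : n → ℂ) : 0 ≤ (C.symmRealPart.sesqForm ζ ζ).re := by
  linarith [two_mul_re_sesqForm_symmRealPart C ζ, (hsec ζ).1, (hsec (star ζ)).1]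

theorem norm_sesqForm_self_le (ht : 0 ≤ 1 + t) (ζ : n → ℂ) :
    ‖C.sesqForm ζ ζ‖ ≤ 2 * (1 + t) * (C.symmRealPart.sesqForm ζ ζ).re := by
  have hre : (C.sesqForm ζ ζ).re ≤ 2 * (C.symmRealPart.sesqForm ζ ζ).re := by
    linarith [two_mul_re_sesqForm_symmRealPart C ζ, (hsec (star ζ)).1]
  calc ‖C.sesqForm ζ ζ‖ ≤ (1 + t) * (C.sesqForm ζ ζ).re :=
        Complex.norm_le_one_add_mul_re (hsec ζ).1 (hsec ζ).2
    _ ≤ 2 * (1 + t) * (C.symmRealPart.sesqForm ζ ζ).re := by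
        linarith [mul_le_mul_of_nonneg_left hre ht]

end Matrix

/-- If `C` takes values in `Σ_θ`, `C = R + iB` with `R_s = (R + Rᵀ)/2`, and `N` is an
operator-norm bound for `R_s` (via its quadratic form), then
`‖Cξ‖² ≤ 16 (1 + tan θ)² N (R_s ξ, ξ)` for all `ξ ∈ ℂ^d`. -/
theorem stmt_7 (d : ℕ) (θ : ℝ) (hθ : θ ∈ Set.Ico 0 (Real.pi / 2))
    (C : Matrix (Fin d) (Fin d) ℂ)
    (hsec : ∀ ξ : Fin d → ℂ,
      0 ≤ (C.mulVec ξ ⬝ᵥ star ξ).re ∧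
      |(C.mulVec ξ ⬝ᵥ star ξ).im| ≤ Real.tan θ * (C.mulVec ξ ⬝ᵥ star ξ).re)
    (N : ℝ)
    (hN : ∀ η : Fin d → ℂ,
      (((Matrix.of fun k l => (((C k l).re + (C l k).re) / 2 : ℂ)).mulVec η) ⬝ᵥ star η).re ≤
        N * ∑ i, ‖η i‖ ^ 2)
    (ξ : Fin d → ℂ) :
    ∑ i, ‖C.mulVec ξ i‖ ^ 2 ≤ 16 * (1 + Real.tan θ) ^ 2 * N *
      (((Matrix.of fun k l => (((C k l).re + (C l k).re) / 2 : ℂ)).mulVec ξ) ⬝ᵥ star ξ).re := by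
  set s : (Fin d → ℂ) → ℝ := fun ζ => (C.symmRealPart.sesqForm ζ ζ).re
  set η := C *ᵥ ξ
  set P := ∑ i, ‖η i‖ ^ 2
  have ht : 0 ≤ Real.tan θ := Real.tan_nonneg_of_nonneg_of_le_pi_div_two hθ.1 hθ.2.le
  have hform := norm_sesqForm_self_le hsec (by linarith)
  have hP : C.sesqForm ξ η = (P : ℂ) := dotProduct_star_self_eq_sum_sq_norm η
  have hP0 : 0 ≤ P := by positivity
  have hsq := LinearMap.sq_norm_apply_le_of_norm_apply_self_le hform ξ η
  rw [hP, Complex.norm_real, Real.norm_of_nonneg hP0] at hsq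
  have hs : 0 ≤ s ξ := re_sesqForm_symmRealPart_nonneg hsec ξ
  have hNs : 0 ≤ N * s ξ := by
    rcases hs.eq_or_lt with hs | hs
    · rw [← hs, mul_zero]
    · have : 0 < N := pos_of_mul_pos_left (hs.trans_le (hN ξ)) (by positivity)
      positivity
  change P ≤ 16 * (1 + Real.tan θ) ^ 2 * N * s ξ
  refine le_of_sq_le_mul_of_nonneg (by linarith [mul_nonneg (sq_nonneg (1 + Real.tan θ)) hNs]) ?_
  calc P ^ 2 ≤ 4 * (2 * (1 + Real.tan θ)) ^ 2 * s ξ * s η := hsq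
    _ ≤ 4 * (2 * (1 + Real.tan θ)) ^ 2 * s ξ * (N * P) := by gcongr; exact hN η
    _ = 16 * (1 + Real.tan θ) ^ 2 * N * s ξ * P := by ring
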